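/- The prior approximation gap E_{q_φ(z)}[ln(q_φ(z|C)/p(z|C;ϑ))] can be of either sign: there exist choices of densities q_φ(z), q_φ(z|C), p(z|C;ϑ) making it strictly positive, and other choices making it strictly negative. Consequently L_NP is not in general a lower bound on the log marginal likelihood. -/
import Mathlib

open MeasureTheory Real Filter Set ProbabilityTheory

noncomputable def g (m : ℝ) : ℝ → ℝ := gaussianPDFReal m 1

lemma g_def (m x : ℝ) : g m x = (Real.sqrt (2 * π))⁻¹ * Real.exp (-(x - m)^2 / 2) := by
  simp [g, gaussianPDFReal, NNReal.coe_one]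

lemma g_pos (m x : ℝ) : 0 < g m x := gaussianPDFReal_pos m 1 x one_ne_zero

lemma g_integrable (m : ℝ) : Integrable (g m) := integrable_gaussianPDFReal m 1

lemma g_integral (m : ℝ) : (∫ x, g m x) = 1 := integral_gaussianPDFReal_eq_one m one_ne_zero

lemma g_shift (m x : ℝ) : g m (x + m) = g 0 x := by simp [g_def]

lemma id_mul_g_integrable (m : ℝ) : Integrable (fun x => x * g m x) := by
  have h1 : Integrable (fun x : ℝ => x * Real.exp (-(1/2 : ℝ) * x ^ 2)) :=
    integrable_mul_exp_neg_mul_sq (by norm_num)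
  have h2 : Integrable (fun x : ℝ => (x - m) * Real.exp (-(1/2 : ℝ) * (x - m) ^ 2)) :=
    h1.comp_sub_right m
  have h3 : Integrable (fun x : ℝ => (Real.sqrt (2 * π))⁻¹ *
      ((x - m) * Real.exp (-(1/2 : ℝ) * (x - m) ^ 2))) := h2.const_mul _
  have h4 : Integrable (fun x : ℝ => (x - m) * g m x) := by
    refine h3.congr (Eventually.of_forall fun x => ?_)
    simp only [g_def]
    rw [show -(x - m)^2 / 2 = -(1/2 : ℝ) * (x - m)^2 by ring]
    ring
  have h5 : Integrable (fun x : ℝ => m * g m x) := (g_integrable m).const_mul m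
  have := h4.add h5
  refine this.congr (Eventually.of_forall fun x => ?_)
  simp only [Pi.add_apply]
  ring

lemma id_mul_g0_integral : (∫ x, x * g 0 x) = 0 := by
  have hodd : ∀ x : ℝ, (-x) * g 0 (-x) = -(x * g 0 x) := by
    intro x; simp only [g_def]; ring_nf
  have h := integral_neg_eq_self (fun x : ℝ => x * g 0 x) volume
  simp_rw [hodd, integral_neg] at h
  linarith

lemma id_mul_g_integral (m : ℝ) : (∫ x, x * g m x) = m := by
  have h := integral_add_right_eq_self (μ := volume) (fun x : ℝ => x * g m x) m
  rw [← h]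
  have : ∀ x : ℝ, (x + m) * g m (x + m) = x * g 0 x + m * g 0 x := by
    intro x; rw [g_shift]; ring
  simp_rw [this]
  rw [integral_add (id_mul_g_integrable 0) ((g_integrable 0).const_mul m),
    id_mul_g0_integral, integral_const_mul, g_integral]
  ring

lemma g_ratio (a b x : ℝ) : g a x / g b x = Real.exp (((x - b)^2 - (x - a)^2)/2) := by
  have hc : (Real.sqrt (2 * π))⁻¹ ≠ 0 := by
    positivity
  rw [g_def, g_def, mul_div_mul_left _ _ hc, ← Real.exp_sub]
  congr 1; ring

lemma exp_mul_g0 (x : ℝ) : Real.exp x * g 0 x = Real.exp (1/2) * g 1 x := by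
  have h : ∀ u v : ℝ, Real.exp u * ((Real.sqrt (2*π))⁻¹ * Real.exp v)
      = (Real.sqrt (2*π))⁻¹ * Real.exp (u + v) := by
    intro u v; rw [Real.exp_add]; ring
  rw [g_def, g_def, h, h]
  congr 1; ring

/-- A (everywhere positive) probability density on ℝ. -/
def IsDensity (f : ℝ → ℝ) : Prop :=
  (∀ x, 0 < f x) ∧ MeasureTheory.Integrable f ∧ (∫ x, f x) = 1

lemma g_isDensity (m : ℝ) : IsDensity (g m) :=
  ⟨g_pos m, g_integrable m, g_integral m⟩

/-- the prior approximation gap can be strictly positive or strictly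
    negative, and consequently L_NP is not in general a lower bound on the log
    marginal likelihood. -/
theorem prior_gap_has_no_fixed_sign :
    (∃ q qC p : ℝ → ℝ, IsDensity q ∧ IsDensity qC ∧ IsDensity p ∧
      Integrable (fun x => q x * Real.log (qC x / p x)) ∧
      0 < ∫ x, q x * Real.log (qC x / p x)) ∧
    (∃ q qC p : ℝ → ℝ, IsDensity q ∧ IsDensity qC ∧ IsDensity p ∧
      Integrable (fun x => q x * Real.log (qC x / p x)) ∧
      (∫ x, q x * Real.log (qC x / p x)) < 0) ∧
    (∃ q qC p L : ℝ → ℝ, IsDensity q ∧ IsDensity qC ∧ IsDensity p ∧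
      (∀ x, 0 < L x) ∧
      Integrable (fun x => L x * p x) ∧
      Integrable (fun x => q x * Real.log (L x)) ∧
      Integrable (fun x => q x * Real.log (q x / qC x)) ∧
      Real.log (∫ x, L x * p x) <
        (∫ x, q x * Real.log (L x)) - ∫ x, q x * Real.log (q x / qC x)) := by
  refine ⟨?_, ?_, ?_⟩
  · -- positive gap : q = qC = N(0,1), p = N(1,1)
    refine ⟨g 0, g 0, g 1, g_isDensity 0, g_isDensity 0, g_isDensity 1, ?_, ?_⟩
    all_goals {
      have key : ∀ x : ℝ, g 0 x * Real.log (g 0 x / g 1 x)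
          = (1/2 : ℝ) * g 0 x - x * g 0 x := by
        intro x; rw [g_ratio, Real.log_exp]; ring
      have hint : Integrable (fun x : ℝ => (1/2 : ℝ) * g 0 x - x * g 0 x) :=
        ((g_integrable 0).const_mul _).sub (id_mul_g_integrable 0)
      first
      | exact hint.congr (Eventually.of_forall fun x => (key x).symm)
      | · simp_rw [key]
          rw [integral_sub ((g_integrable 0).const_mul _) (id_mul_g_integrable 0),
            integral_const_mul, g_integral, id_mul_g_integral]
          norm_num }
  · -- negative gap : q = p = N(0,1), qC = N(1,1)
    refine ⟨g 0, g 1, g 0, g_isDensity 0, g_isDensity 1, g_isDensity 0, ?_, ?_⟩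
    all_goals {
      have key : ∀ x : ℝ, g 0 x * Real.log (g 1 x / g 0 x)
          = x * g 0 x - (1/2 : ℝ) * g 0 x := by
        intro x; rw [g_ratio, Real.log_exp]; ring
      have hint : Integrable (fun x : ℝ => x * g 0 x - (1/2 : ℝ) * g 0 x) :=
        (id_mul_g_integrable 0).sub ((g_integrable 0).const_mul _)
      first
      | exact hint.congr (Eventually.of_forall fun x => (key x).symm)
      | · simp_rw [key]
          rw [integral_sub (id_mul_g_integrable 0) ((g_integrable 0).const_mul _),
            integral_const_mul, g_integral, id_mul_g_integral]
          norm_num }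
  · -- L_NP fails : q = qC = N(1,1), p = N(0,1), L = exp
    refine ⟨g 1, g 1, g 0, Real.exp, g_isDensity 1, g_isDensity 1, g_isDensity 0,
      fun x => Real.exp_pos x, ?_, ?_, ?_, ?_⟩
    · exact ((g_integrable 1).const_mul (Real.exp (1/2))).congr
        (Eventually.of_forall fun x => (exp_mul_g0 x).symm)
    · exact (id_mul_g_integrable 1).congr (Eventually.of_forall fun x => by
        simp [Real.log_exp, mul_comm])
    · refine (integrable_zero _ _ _).congr (Eventually.of_forall fun x => ?_)
      simp [div_self (g_pos 1 x).ne']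
    · have h1 : (∫ x, Real.exp x * g 0 x) = Real.exp (1/2) := by
        simp_rw [exp_mul_g0]
        rw [integral_const_mul, g_integral, mul_one]
      have h2 : (∫ x, g 1 x * Real.log (Real.exp x)) = 1 := by
        simp_rw [Real.log_exp, mul_comm]
        exact id_mul_g_integral 1
      have h3 : (∫ x, g 1 x * Real.log (g 1 x / g 1 x)) = 0 := by
        have : ∀ x : ℝ, g 1 x * Real.log (g 1 x / g 1 x) = 0 := fun x => by
          rw [div_self (g_pos 1 x).ne', Real.log_one, mul_zero]
        simp_rw [this, integral_zero]
      rw [h1, h2, h3, Real.log_exp]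
      norm_num
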